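/- Let G be a group, H a subgroup of G, and suppose there exists a sequence of elements g₁, g₂, g₃, … of G such that for all indices i ≠ j and all x, y ∈ H, the conjugate gᵢ x gᵢ⁻¹ commutes with gⱼ y gⱼ⁻¹. Then every homogeneous quasimorphism φ on G restricts to a homomorphism on H, i.e. φ(ab) = φ(a) + φ(b) for all a, b ∈ H. -/

import Mathlib

/-- The set of defect values of a function `φ : G → ℝ`. -/
def defectSet {G : Type*} [Group G] (φ : G → ℝ) : Set ℝ :=
  {x : ℝ | ∃ g h : G, x = |φ (g * h) - φ g - φ h|}

/-- The defect `D(φ) = sup_{g,h} |φ(gh) − φ(g) − φ(h)|`. -/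
noncomputable def defect {G : Type*} [Group G] (φ : G → ℝ) : ℝ :=
  sSup (defectSet φ)

/-- `φ` is a quasimorphism if its defect is finite. -/
def IsQuasimorphism {G : Type*} [Group G] (φ : G → ℝ) : Prop :=
  BddAbove (defectSet φ)

/-- `φ` is homogeneous if `φ(gⁿ) = n·φ(g)` for all `g` and all integers `n`. -/
def IsHomogeneous {G : Type*} [Group G] (φ : G → ℝ) : Prop :=
  ∀ (g : G) (n : ℤ), φ (g ^ n) = n * φ g

/-!
A homogeneous quasimorphism is additive on commuting elements and invariant under conjugation.
For `a, b ∈ H` put `xᵢ = gᵢ a gᵢ⁻¹`, `yᵢ = gᵢ b gᵢ⁻¹`. Since `xᵢ` commutes with `yⱼ` for `i ≠ j`,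
`∏_{i<n} xᵢyᵢ = (∏_{i<n} xᵢ)(∏_{i<n} yᵢ)`, and the three products are products of pairwise commuting
conjugates of `ab`, `a`, `b`, so their values are `n φ(ab)`, `n φ(a)`, `n φ(b)`. A single defect
estimate then gives `n |φ(ab) − φ(a) − φ(b)| ≤ D(φ)` for every `n`.
-/

theorem eq_of_forall_nat_abs_mul_sub_mul_le {s t C : ℝ} (h : ∀ n : ℕ, |n * s - n * t| ≤ C) :
    s = t := by
  by_contra hst
  have hpos : 0 < |s - t| := abs_pos.mpr (sub_ne_zero.mpr hst)
  obtain ⟨n, hn⟩ := exists_nat_gt (C / |s - t|)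
  have hlt : C < n * |s - t| := (div_lt_iff₀ hpos).mp hn
  have hle := h n
  rw [← mul_sub, abs_mul, Nat.abs_cast] at hle
  linarith

theorem Finset.noncommProd_conj_mul {ι G : Type*} [Group G] (s : Finset ι) (g : ι → G) (x y : G)
    (comm_xy comm_x comm_y) (comm_yx : (s : Set ι).Pairwise fun i j =>
      Commute (g i * y * (g i)⁻¹) (g j * x * (g j)⁻¹)) :
    s.noncommProd (fun i => g i * (x * y) * (g i)⁻¹) comm_xy =
      s.noncommProd (fun i => g i * x * (g i)⁻¹) comm_x *
        s.noncommProd (fun i => g i * y * (g i)⁻¹) comm_y := by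
  rw [← Finset.noncommProd_mul_distrib (comm_gf := comm_yx)]
  exact Finset.noncommProd_congr rfl (fun i _ => conj_mul.symm) _

section

variable {G : Type*} [Group G] {φ : G → ℝ}

theorem IsQuasimorphism.abs_sub_le_defect (hq : IsQuasimorphism φ) (g h : G) :
    |φ (g * h) - φ g - φ h| ≤ defect φ :=
  le_csSup hq ⟨g, h, rfl⟩

namespace IsHomogeneous

theorem map_pow (hh : IsHomogeneous φ) (g : G) (n : ℕ) : φ (g ^ n) = n * φ g := by
  simpa using hh g n

theorem map_inv (hh : IsHomogeneous φ) (g : G) : φ g⁻¹ = -φ g := by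
  simpa using hh g (-1)

theorem map_mul_of_commute (hh : IsHomogeneous φ) (hq : IsQuasimorphism φ) {u v : G}
    (huv : Commute u v) : φ (u * v) = φ u + φ v := by
  refine eq_of_forall_nat_abs_mul_sub_mul_le (C := defect φ) fun n => ?_
  have hdef := hq.abs_sub_le_defect (u ^ n) (v ^ n)
  rwa [← huv.mul_pow, hh.map_pow, hh.map_pow, hh.map_pow, sub_sub, ← mul_add] at hdef

theorem map_conj (hh : IsHomogeneous φ) (hq : IsQuasimorphism φ) (g x : G) :
    φ (g * x * g⁻¹) = φ x := by
  refine eq_of_forall_nat_abs_mul_sub_mul_le (C := 2 * defect φ) fun n => ?_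
  have hleft := hq.abs_sub_le_defect (g * x ^ n) g⁻¹
  have hright := hq.abs_sub_le_defect g (x ^ n)
  -- `φ g⁻¹ = -φ g` makes the two defect estimates telescope.
  rw [hh.map_inv] at hleft
  rw [← hh.map_pow, ← hh.map_pow, conj_pow]
  rw [abs_le] at hleft hright ⊢
  constructor <;> linarith [hleft.1, hleft.2, hright.1, hright.2]

theorem map_noncommProd (hh : IsHomogeneous φ) (hq : IsQuasimorphism φ) {ι : Type*}
    (s : Finset ι) (f : ι → G) (comm) :
    φ (s.noncommProd f comm) = ∑ i ∈ s, φ (f i) := by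
  classical
  induction s using Finset.induction_on with
  | empty => simpa using hh.map_pow 1 0
  | insert i s hi ih =>
    rw [Finset.noncommProd_insert_of_notMem _ _ _ _ hi, Finset.sum_insert hi, ← ih]
    exact hh.map_mul_of_commute hq <| Finset.noncommProd_commute _ _ _ _ fun j hj =>
      comm (Finset.mem_insert_self i s) (Finset.mem_insert_of_mem hj)
        (ne_of_mem_of_not_mem hj hi).symm

theorem map_noncommProd_conj (hh : IsHomogeneous φ) (hq : IsQuasimorphism φ) {ι : Type*}
    (s : Finset ι) (g : ι → G) (x : G) (comm) :
    φ (s.noncommProd (fun i => g i * x * (g i)⁻¹) comm) = s.card * φ x := by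
  simp [hh.map_noncommProd hq, hh.map_conj hq]

end IsHomogeneous

end

/-- If `H ≤ G` admits a sequence `g₁, g₂, …` of elements of `G` such that for `i ≠ j`
the conjugates `gᵢ H gᵢ⁻¹` and `gⱼ H gⱼ⁻¹` commute elementwise, then every homogeneous
quasimorphism on `G` restricts to a homomorphism on `H`. -/
theorem homogeneous_quasimorphism_restricts_to_hom {G : Type*} [Group G]
    (H : Subgroup G) (g : ℕ → G)
    (hcomm : ∀ i j : ℕ, i ≠ j → ∀ x ∈ H, ∀ y ∈ H,
      Commute (g i * x * (g i)⁻¹) (g j * y * (g j)⁻¹))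
    (φ : G → ℝ) (hq : IsQuasimorphism φ) (hh : IsHomogeneous φ) :
    ∀ a ∈ H, ∀ b ∈ H, φ (a * b) = φ a + φ b := by
  intro a ha b hb
  refine eq_of_forall_nat_abs_mul_sub_mul_le (C := defect φ) fun n => ?_
  have hpair : ∀ x ∈ H, ∀ y ∈ H, (Finset.range n : Set ℕ).Pairwise fun i j =>
      Commute (g i * x * (g i)⁻¹) (g j * y * (g j)⁻¹) :=
    fun x hx y hy i _ j _ hij => hcomm i j hij x hx y hy
  have hab := H.mul_mem ha hb
  have hsplit := Finset.noncommProd_conj_mul (Finset.range n) g a b (hpair _ hab _ hab)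
    (hpair a ha a ha) (hpair b hb b hb) (hpair b hb a ha)
  have hdef := hq.abs_sub_le_defect ((Finset.range n).noncommProd _ (hpair a ha a ha))
    ((Finset.range n).noncommProd _ (hpair b hb b hb))
  rwa [← hsplit, hh.map_noncommProd_conj hq, hh.map_noncommProd_conj hq,
    hh.map_noncommProd_conj hq, Finset.card_range, sub_sub, ← mul_add] at hdef
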